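/- The q-expansion identity Δ = (E₄³ − E₆²)/1728 holds in ℤ[[q]]: q·∏_{m=1}^∞ (1−q^m)^{24} = ((1 + 240∑_{n≥1}σ₃(n)q^n)³ − (1 − 504∑_{n≥1}σ₅(n)q^n)²)/1728. -/

import Mathlib

open PowerSeries Finset

/-- Normalized Eisenstein series of weight 4, as a formal q-expansion in ℚ[[q]]. -/
noncomputable def EisensteinE4 : PowerSeries ℚ :=
  PowerSeries.mk fun n => if n = 0 then 1 else 240 * ∑ d ∈ n.divisors, (d : ℚ) ^ 3

/-- Normalized Eisenstein series of weight 6, as a formal q-expansion in ℚ[[q]]. -/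
noncomputable def EisensteinE6 : PowerSeries ℚ :=
  PowerSeries.mk fun n => if n = 0 then 1 else -504 * ∑ d ∈ n.divisors, (d : ℚ) ^ 5

/-!
Both `Δ = q ∏ (1 - qᵐ)²⁴` and `(E₄³ - E₆²) / 1728` solve `θ f = E₂ f`, where `θ = q d/dq` and
`E₂ = 1 - 24 ∑ σ₁(n) qⁿ`, and both start `q + O(q²)`. Comparing `n`-th coefficients,
`(n - 1) fₙ` is determined by the lower ones, so the two series agree; since the `n`-th
coefficient of `Δ` only sees the factors with `m ≤ n`, it suffices to work modulo `qⁿ⁺¹`.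

For `Δ` the equation is its logarithmic derivative: `θ log (1 - qᵐ) = -m qᵐ / (1 - qᵐ)`, and these
sum to the Lambert series `∑ σ₁(n) qⁿ`. For `E₄³ - E₆²` it follows from Ramanujan's equations
`3 θ E₄ = E₂ E₄ - E₆` and `2 θ E₆ = E₂ E₆ - E₄²`, which amount to convolution identities for
`σ₁ σ₃`, `σ₁ σ₅` and `σ₃ σ₃`. These are proved by Liouville's elementary method: a symmetric
polynomial weight is summed over the solutions of `a x + b y = n` in positive integers in two
ways, using the bijection `(a, x, b, y) ↦ (b, x + y, a - b, x)` from `{b < a}` onto `{y < x}`;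
what remains are sums over the diagonals `a = b` and `x = y`, which are divisor sums.
-/

open ArithmeticFunction
open scoped ArithmeticFunction.sigma

theorem Finset.sum_eq_two_nsmul_sum_filter_lt_add_sum_filter_eq {α β M : Type*} [LinearOrder β]
    [AddCommMonoid M] (s : Finset (α × α)) (hs : ∀ t ∈ s, t.swap ∈ s) (g : α → β)
    (f : α × α → M) (hf : ∀ t ∈ s, f t.swap = f t) :
    ∑ t ∈ s, f t =
      2 • ∑ t ∈ s with g t.2 < g t.1, f t + ∑ t ∈ s with g t.1 = g t.2, f t := by
  have hswap : ∑ t ∈ s with g t.1 < g t.2, f t = ∑ t ∈ s with g t.2 < g t.1, f t :=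
    sum_nbij' Prod.swap Prod.swap (by simp +contextual [hs]) (by simp +contextual [hs])
      (by simp) (by simp) (fun t ht => (hf t (mem_filter.1 ht).1).symm)
  rw [← sum_filter_add_sum_filter_not s (fun t => g t.2 < g t.1),
    ← sum_filter_add_sum_filter_not (s.filter fun t => ¬ g t.2 < g t.1)
      (fun t => g t.1 < g t.2), filter_filter, filter_filter, two_nsmul, add_assoc]
  congr 2
  · rw [← hswap]
    exact sum_congr (filter_congr fun t _ => ⟨fun h => h.2, fun h => ⟨h.asymm, h⟩⟩) fun _ _ => rfl
  · exact sum_congr (filter_congr fun t _ => by simp only [not_lt]; exact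
      ⟨fun h => le_antisymm h.1 h.2, fun h => ⟨h.le, h.ge⟩⟩) fun _ _ => rfl

def twoProductReps (n : ℕ) : Finset ((ℕ × ℕ) × (ℕ × ℕ)) :=
  ((Icc 1 n ×ˢ Icc 1 n) ×ˢ (Icc 1 n ×ˢ Icc 1 n)).filter
    fun t => t.1.1 * t.1.2 + t.2.1 * t.2.2 = n

theorem mem_twoProductReps {n a x b y : ℕ} :
    ((a, x), (b, y)) ∈ twoProductReps n ↔ 0 < a ∧ 0 < x ∧ 0 < b ∧ 0 < y ∧ a * x + b * y = n := by
  simp only [twoProductReps, mem_filter, mem_product, mem_Icc]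
  constructor
  · rintro ⟨⟨⟨⟨ha, -⟩, hx, -⟩, ⟨hb, -⟩, hy, -⟩, h⟩
    exact ⟨ha, hx, hb, hy, h⟩
  · rintro ⟨ha, hx, hb, hy, h⟩
    refine ⟨⟨⟨⟨ha, ?_⟩, hx, ?_⟩, ⟨hb, ?_⟩, hy, ?_⟩, h⟩ <;> nlinarith

theorem swap_mem_twoProductReps {n : ℕ} {t} (ht : t ∈ twoProductReps n) :
    t.swap ∈ twoProductReps n := by
  obtain ⟨⟨a, x⟩, b, y⟩ := t
  rw [mem_twoProductReps] at ht
  exact mem_twoProductReps.2 (by omega)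

theorem sum_twoProductReps_filter_lt_fst {M : Type*} [AddCommMonoid M] (n : ℕ)
    (f : ℕ → ℕ → M) :
    ∑ t ∈ twoProductReps n with t.2.1 < t.1.1, f t.1.1 t.2.1 =
      ∑ t ∈ twoProductReps n with t.2.2 < t.1.2, f (t.1.1 + t.2.1) t.1.1 := by
  refine sum_nbij' (fun t => ((t.2.1, t.1.2 + t.2.2), (t.1.1 - t.2.1, t.1.2)))
    (fun t => ((t.1.1 + t.2.1, t.2.2), (t.1.1, t.1.2 - t.2.2))) ?_ ?_ ?_ ?_ ?_ <;>
    rintro ⟨⟨a, x⟩, b, y⟩ ht <;>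
    simp only [mem_filter, mem_twoProductReps, Prod.mk.injEq, and_true, true_and] at ht ⊢
  · obtain ⟨⟨ha, hx, hb, hy, h⟩, hlt⟩ := ht
    refine ⟨⟨hb, by omega, by omega, hx, ?_⟩, by omega⟩
    obtain ⟨c, rfl⟩ := Nat.exists_eq_add_of_le hlt.le
    rw [← h, Nat.add_sub_cancel_left]
    ring
  · obtain ⟨⟨ha, hx, hb, hy, h⟩, hlt⟩ := ht
    refine ⟨⟨by omega, hy, ha, by omega, ?_⟩, by omega⟩
    obtain ⟨c, rfl⟩ := Nat.exists_eq_add_of_le hlt.le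
    rw [← h, Nat.add_sub_cancel_left]
    ring
  · omega
  · omega
  · rw [Nat.add_sub_cancel' ht.2.le]

theorem sum_twoProductReps_filter_fst_eq {M : Type*} [AddCommMonoid M] (n : ℕ)
    (f : (ℕ × ℕ) × (ℕ × ℕ) → M) :
    ∑ t ∈ twoProductReps n with t.1.1 = t.2.1, f t =
      ∑ p ∈ n.divisorsAntidiagonal, ∑ x ∈ Ico 1 p.2, f ((p.1, x), (p.1, p.2 - x)) := by
  rw [sum_sigma']
  refine (sum_nbij' (fun p : (_ : ℕ × ℕ) × ℕ => ((p.1.1, p.2), (p.1.1, p.1.2 - p.2)))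
    (fun t => ⟨(t.1.1, t.1.2 + t.2.2), t.1.2⟩) ?_ ?_ ?_ ?_ (fun _ _ => rfl)).symm
  · rintro ⟨⟨d, e⟩, x⟩ h
    simp only [mem_sigma, Nat.mem_divisorsAntidiagonal, mem_Ico] at h
    simp only [mem_filter, mem_twoProductReps]
    obtain ⟨⟨rfl, hn⟩, hx, hxe⟩ := h
    have hd := Nat.pos_of_ne_zero (left_ne_zero_of_mul hn)
    refine ⟨⟨hd, hx, hd, by omega, ?_⟩, trivial⟩
    rw [← Nat.mul_add, Nat.add_sub_cancel' hxe.le]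
  · rintro ⟨⟨a, x⟩, b, y⟩ h
    simp only [mem_filter, mem_twoProductReps] at h
    obtain ⟨⟨ha, hx, hb, hy, h⟩, rfl⟩ := h
    simp only [mem_sigma, Nat.mem_divisorsAntidiagonal, mem_Ico]
    have hax := Nat.mul_pos ha hx
    exact ⟨⟨by rw [Nat.mul_add, h], by omega⟩, hx, by omega⟩
  · rintro ⟨⟨d, e⟩, x⟩ h
    simp only [mem_sigma, mem_Ico] at h
    simp only [Sigma.mk.injEq, Prod.mk.injEq, heq_eq_eq, and_true, true_and]
    omega
  · rintro ⟨⟨a, x⟩, b, y⟩ h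
    simp only [mem_filter, mem_twoProductReps] at h
    obtain ⟨-, rfl⟩ := h
    simp

theorem sum_twoProductReps_filter_snd_eq {M : Type*} [AddCommMonoid M] (n : ℕ)
    (f : (ℕ × ℕ) × (ℕ × ℕ) → M) :
    ∑ t ∈ twoProductReps n with t.1.2 = t.2.2, f t =
      ∑ p ∈ n.divisorsAntidiagonal, ∑ a ∈ Ico 1 p.2, f ((a, p.1), (p.2 - a, p.1)) := by
  rw [← sum_twoProductReps_filter_fst_eq n fun t => f ((t.1.2, t.1.1), (t.2.2, t.2.1))]
  refine sum_nbij' (fun t => (t.1.swap, t.2.swap)) (fun t => (t.1.swap, t.2.swap)) ?_ ?_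
    (by simp) (by simp) (by simp)
  all_goals
    rintro ⟨⟨a, x⟩, b, y⟩ h
    simp only [mem_filter, mem_twoProductReps, Prod.swap_prod_mk] at h ⊢
    refine ⟨⟨by omega, by omega, by omega, by omega, ?_⟩, h.2⟩
    rw [← h.1.2.2.2.2]
    ring

theorem sum_twoProductReps_mul {R : Type*} [CommSemiring R] (n : ℕ) (u v : ℕ → R) :
    ∑ t ∈ twoProductReps n, u t.1.1 * v t.2.1 =
      ∑ p ∈ antidiagonal n, (∑ d ∈ p.1.divisors, u d) * ∑ d ∈ p.2.divisors, v d := by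
  rw [← sum_fiberwise_of_maps_to (g := fun t => (t.1.1 * t.1.2, t.2.1 * t.2.2))
    (t := antidiagonal n) (fun t ht => by
      obtain ⟨⟨a, x⟩, b, y⟩ := t
      exact HasAntidiagonal.mem_antidiagonal.2 (mem_twoProductReps.1 ht).2.2.2.2)]
  refine sum_congr rfl fun ⟨k, l⟩ hkl => ?_
  rw [HasAntidiagonal.mem_antidiagonal] at hkl
  have hfiber : {t ∈ twoProductReps n | (t.1.1 * t.1.2, t.2.1 * t.2.2) = (k, l)} =
      k.divisorsAntidiagonal ×ˢ l.divisorsAntidiagonal := by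
    ext ⟨⟨a, x⟩, b, y⟩
    simp only [mem_filter, mem_twoProductReps, mem_product, Nat.mem_divisorsAntidiagonal,
      Prod.ext_iff]
    constructor
    · rintro ⟨⟨ha, hx, hb, hy, -⟩, rfl, rfl⟩
      exact ⟨⟨rfl, by positivity⟩, rfl, by positivity⟩
    · rintro ⟨⟨rfl, hax⟩, rfl, hby⟩
      simp only [Nat.mul_ne_zero_iff] at hax hby
      exact ⟨⟨by omega, by omega, by omega, by omega, hkl⟩, rfl, rfl⟩
  rw [hfiber, sum_product, ← Nat.sum_divisorsAntidiagonal (fun a _ => u a),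
    ← Nat.sum_divisorsAntidiagonal (fun a _ => v a), sum_mul_sum]

theorem sum_twoProductReps_eq_sum_divisorsAntidiagonal (n : ℕ) (w v : ℕ → ℕ → ℚ)
    (hw : ∀ a b, w a b = w b a) (hv : ∀ a b, v a b = v b a)
    (hvw : ∀ a b, v a b = 2 * (w (a + b) a - w a b)) :
    ∑ t ∈ twoProductReps n, v t.1.1 t.2.1 =
      ∑ p ∈ n.divisorsAntidiagonal,
        (∑ a ∈ Ico 1 p.2, (v a (p.2 - a) + 2 * w a (p.2 - a)) - 2 * (p.2 - 1 : ℚ) * w p.1 p.1) := by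
  have split (f : ℕ → ℕ → ℚ) (hf : ∀ a b, f a b = f b a) (g : ℕ × ℕ → ℕ) :=
    sum_eq_two_nsmul_sum_filter_lt_add_sum_filter_eq (twoProductReps n)
      (fun _ => swap_mem_twoProductReps) g (fun t => f t.1.1 t.2.1) (fun _ _ => hf _ _)
  have hw_fst := split w hw Prod.fst
  have hw_snd := split w hw Prod.snd
  have hv_snd := split v hv Prod.snd
  have hv_lt : ∑ t ∈ twoProductReps n with t.2.2 < t.1.2, v t.1.1 t.2.1 =
      2 * (∑ t ∈ twoProductReps n with t.2.2 < t.1.2, w (t.1.1 + t.2.1) t.1.1 -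
        ∑ t ∈ twoProductReps n with t.2.2 < t.1.2, w t.1.1 t.2.1) := by
    rw [← sum_sub_distrib, mul_sum]
    exact sum_congr rfl fun t _ => hvw _ _
  have hw_diag : ∑ t ∈ twoProductReps n with t.1.1 = t.2.1, w t.1.1 t.2.1 =
      ∑ p ∈ n.divisorsAntidiagonal, (p.2 - 1 : ℚ) * w p.1 p.1 := by
    rw [sum_twoProductReps_filter_fst_eq n fun t => w t.1.1 t.2.1]
    refine sum_congr rfl fun p hp => ?_
    obtain ⟨hpn, hn⟩ := Nat.mem_divisorsAntidiagonal.1 hp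
    have : 1 ≤ p.2 := Nat.one_le_iff_ne_zero.2 (right_ne_zero_of_mul (hpn ▸ hn))
    simp [Nat.cast_sub this]
  rw [sum_twoProductReps_filter_lt_fst] at hw_fst
  have hx_diag := sum_twoProductReps_filter_snd_eq n fun t => v t.1.1 t.2.1 + 2 * w t.1.1 t.2.1
  simp only [sum_add_distrib, ← mul_sum] at hx_diag
  rw [sum_sub_distrib]
  simp only [sum_add_distrib, mul_assoc, ← mul_sum, two_nsmul] at *
  -- splitting `∑ w` along `a ≷ b` and along `x ≷ y` gives `∑_{y<x} v = ∑_{x=y} w - ∑_{a=b} w`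
  linear_combination hv_snd + 2 * hv_lt - 2 * hw_fst + 2 * hw_snd + hx_diag - 2 * hw_diag

theorem sum_divisorsAntidiagonal_fst_pow {R : Type*} [Semiring R] (k n : ℕ) :
    ∑ p ∈ n.divisorsAntidiagonal, (p.1 : R) ^ k = σ k n := by
  rw [Nat.sum_divisorsAntidiagonal fun a _ => (a : R) ^ k, sigma_apply]
  push_cast
  rfl

theorem sum_divisorsAntidiagonal_snd_pow {R : Type*} [Semiring R] (k n : ℕ) :
    ∑ p ∈ n.divisorsAntidiagonal, (p.2 : R) ^ k = σ k n := by
  rw [← Nat.map_swap_divisorsAntidiagonal, sum_map]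
  exact sum_divisorsAntidiagonal_fst_pow k n

theorem sum_twoProductReps_pow_mul_pow {R : Type*} [CommSemiring R] (r s n : ℕ) :
    ∑ t ∈ twoProductReps n, (t.1.1 : R) ^ r * (t.2.1 : R) ^ s =
      ∑ p ∈ antidiagonal n, (σ r p.1 : R) * σ s p.2 := by
  rw [sum_twoProductReps_mul n (fun a => (a : R) ^ r) (fun b => (b : R) ^ s)]
  simp only [sigma_apply, Nat.cast_sum, Nat.cast_pow]

theorem sum_antidiagonal_sigma_one_mul_sigma_three (n : ℕ) :
    240 * ∑ p ∈ antidiagonal n, (σ 1 p.1 : ℚ) * σ 3 p.2 =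
      21 * σ 5 n + 10 * σ 3 n - σ 1 n - 30 * n * σ 3 n := by
  set w : ℕ → ℕ → ℚ := fun a b => a ^ 4 - 2 * a ^ 3 * b + 3 * a ^ 2 * b ^ 2 - 2 * a * b ^ 3 + b ^ 4
  set v : ℕ → ℕ → ℚ := fun a b => 8 * (a ^ 1 * b ^ 3 + a ^ 3 * b ^ 1)
  have key := sum_twoProductReps_eq_sum_divisorsAntidiagonal n w v (fun a b => by ring)
    (fun a b => by ring) (fun a b => by simp only [v, w]; push_cast; ring)
  have hv : ∑ t ∈ twoProductReps n, v t.1.1 t.2.1 =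
      16 * ∑ p ∈ antidiagonal n, (σ 1 p.1 : ℚ) * σ 3 p.2 := by
    simp only [v, ← mul_sum, sum_add_distrib, sum_twoProductReps_pow_mul_pow]
    rw [← Nat.sum_antidiagonal_swap (f := fun p => (σ 3 p.1 : ℚ) * σ 1 p.2)]
    simp only [Prod.fst_swap, Prod.snd_swap, mul_comm (σ 3 _ : ℚ)]
    ring
  have hinner (e : ℕ) (he : 1 ≤ e) :
      ∑ a ∈ Ico 1 e, (v a (e - a) + 2 * w a (e - a)) =
        -1 / 15 * e + 2 / 3 * e ^ 3 - 2 * e ^ 4 + 7 / 5 * e ^ 5 := by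
    -- `F k = ∑ a < k, (v + 2 w) a (e - a)`, from Faulhaber's formulas
    let F : ℕ → ℚ := fun k => -1/15 * k + k * e ^ 2 + 2 * k * e ^ 3 + 2 * k * e ^ 4 - k ^ 2 * e
      - 3 * k ^ 2 * e ^ 2 - 2 * k ^ 2 * e ^ 3 + 2/3 * k ^ 3 + 2 * k ^ 3 * e + 2 * k ^ 3 * e ^ 2
      - k ^ 4 - k ^ 4 * e + 2/5 * k ^ 5
    have hF : ∀ a ∈ Ico 1 e, v a (e - a) + 2 * w a (e - a) = F (a + 1) - F a := by
      intro a ha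
      simp only [v, w, F, Nat.cast_sub (mem_Ico.1 ha).2.le]
      push_cast
      ring
    rw [sum_congr rfl hF, sum_Ico_sub F he]
    simp only [F]
    push_cast
    ring
  have hdiv : ∀ p ∈ n.divisorsAntidiagonal,
      ∑ a ∈ Ico 1 p.2, (v a (p.2 - a) + 2 * w a (p.2 - a)) - 2 * (p.2 - 1 : ℚ) * w p.1 p.1 =
        -1 / 15 * p.2 ^ 1 + 2 / 3 * p.2 ^ 3 - 2 * p.2 ^ 4 + 7 / 5 * p.2 ^ 5
          - 2 * n * p.1 ^ 3 + 2 * p.1 ^ 4 := by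
    intro p hp
    obtain ⟨hpn, hn⟩ := Nat.mem_divisorsAntidiagonal.1 hp
    have hpn' : (p.1 : ℚ) * p.2 = n := by exact_mod_cast hpn
    rw [hinner p.2 (Nat.one_le_iff_ne_zero.2 (right_ne_zero_of_mul (hpn ▸ hn)))]
    simp only [w]
    linear_combination (-2 * (p.1 : ℚ) ^ 3) * hpn'
  rw [hv, sum_congr rfl hdiv] at key
  simp only [sum_add_distrib, sum_sub_distrib, ← mul_sum, sum_divisorsAntidiagonal_fst_pow,
    sum_divisorsAntidiagonal_snd_pow] at key
  linear_combination 15 * key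

theorem sum_antidiagonal_sigma_one_mul_sigma_five_sub_sigma_three_mul_sigma_three (n : ℕ) :
    1008 * ∑ p ∈ antidiagonal n, (σ 1 p.1 : ℚ) * σ 5 p.2 -
        4800 * ∑ p ∈ antidiagonal n, (σ 3 p.1 : ℚ) * σ 3 p.2 =
      42 * σ 5 n + 40 * σ 3 n + 2 * σ 1 n - 84 * n * σ 5 n := by
  set w : ℕ → ℕ → ℚ := fun a b => 14 * a ^ 6 - 42 * a ^ 5 * b - 165 * a ^ 4 * b ^ 2
    + 400 * a ^ 3 * b ^ 3 - 165 * a ^ 2 * b ^ 4 - 42 * a * b ^ 5 + 14 * b ^ 6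
  set v : ℕ → ℕ → ℚ := fun a b => 168 * (a ^ 1 * b ^ 5 + a ^ 5 * b ^ 1) - 1600 * (a ^ 3 * b ^ 3)
  have key := sum_twoProductReps_eq_sum_divisorsAntidiagonal n w v (fun a b => by ring)
    (fun a b => by ring) (fun a b => by simp only [v, w]; push_cast; ring)
  have hv : ∑ t ∈ twoProductReps n, v t.1.1 t.2.1 =
      336 * ∑ p ∈ antidiagonal n, (σ 1 p.1 : ℚ) * σ 5 p.2 -
        1600 * ∑ p ∈ antidiagonal n, (σ 3 p.1 : ℚ) * σ 3 p.2 := by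
    simp only [v, ← mul_sum, sum_add_distrib, sum_sub_distrib, sum_twoProductReps_pow_mul_pow]
    rw [← Nat.sum_antidiagonal_swap (f := fun p => (σ 5 p.1 : ℚ) * σ 1 p.2)]
    simp only [Prod.fst_swap, Prod.snd_swap, mul_comm (σ 5 _ : ℚ)]
    ring
  have hinner (e : ℕ) (he : 1 ≤ e) :
      ∑ a ∈ Ico 1 e, (v a (e - a) + 2 * w a (e - a)) =
        2 / 3 * e + 40 / 3 * e ^ 3 + 14 * e ^ 5 - 28 * e ^ 6 := by
    -- `F k = ∑ a < k, (v + 2 w) a (e - a)`, from Faulhaber's formulas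
    let F : ℕ → ℚ := fun k => 2/3 * k + 11 * k * e ^ 2 - 55 * k * e ^ 4 + 42 * k * e ^ 5
      + 28 * k * e ^ 6 + 7 * k ^ 2 * e + 200 * k ^ 2 * e ^ 3 + 165 * k ^ 2 * e ^ 4
      - 42 * k ^ 2 * e ^ 5 - 14/3 * k ^ 3 - 110 * k ^ 3 * e ^ 2 - 400 * k ^ 3 * e ^ 3
      - 110 * k ^ 3 * e ^ 4 - 35 * k ^ 4 * e + 165 * k ^ 4 * e ^ 2 + 200 * k ^ 4 * e ^ 3
      + 14 * k ^ 5 + 42 * k ^ 5 * e - 66 * k ^ 5 * e ^ 2 - 14 * k ^ 6 - 14 * k ^ 6 * e + 4 * k ^ 7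
    have hF : ∀ a ∈ Ico 1 e, v a (e - a) + 2 * w a (e - a) = F (a + 1) - F a := by
      intro a ha
      simp only [v, w, F, Nat.cast_sub (mem_Ico.1 ha).2.le]
      push_cast
      ring
    rw [sum_congr rfl hF, sum_Ico_sub F he]
    simp only [F]
    push_cast
    ring
  have hdiv : ∀ p ∈ n.divisorsAntidiagonal,
      ∑ a ∈ Ico 1 p.2, (v a (p.2 - a) + 2 * w a (p.2 - a)) - 2 * (p.2 - 1 : ℚ) * w p.1 p.1 =
        2 / 3 * p.2 ^ 1 + 40 / 3 * p.2 ^ 3 + 14 * p.2 ^ 5 - 28 * p.2 ^ 6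
          - 28 * n * p.1 ^ 5 + 28 * p.1 ^ 6 := by
    intro p hp
    obtain ⟨hpn, hn⟩ := Nat.mem_divisorsAntidiagonal.1 hp
    have hpn' : (p.1 : ℚ) * p.2 = n := by exact_mod_cast hpn
    rw [hinner p.2 (Nat.one_le_iff_ne_zero.2 (right_ne_zero_of_mul (hpn ▸ hn)))]
    simp only [w]
    linear_combination (-28 * (p.1 : ℚ) ^ 5) * hpn'
  rw [hv, sum_congr rfl hdiv] at key
  simp only [sum_add_distrib, sum_sub_distrib, ← mul_sum, sum_divisorsAntidiagonal_fst_pow,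
    sum_divisorsAntidiagonal_snd_pow] at key
  linear_combination 3 * key

theorem coeff_natCast_mul {R : Type*} [Semiring R] (k : ℕ) (f : R⟦X⟧) (n : ℕ) :
    coeff n ((k : R⟦X⟧) * f) = k * coeff n f := by
  rw [← map_natCast (C (R := R)), coeff_C_mul]

theorem coeff_ofNat_mul {R : Type*} [Semiring R] (k : ℕ) [k.AtLeastTwo] (f : R⟦X⟧) (n : ℕ) :
    coeff n (no_index (OfNat.ofNat k : R⟦X⟧) * f) = OfNat.ofNat k * coeff n f := by
  rw [← map_ofNat (C (R := R)), coeff_C_mul]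

theorem Derivation.map_ofNat {R A M : Type*} [CommSemiring R] [CommSemiring A] [Algebra R A]
    [AddCommMonoid M] [Module A M] [Module R M] (D : Derivation R A M) (k : ℕ) [k.AtLeastTwo] :
    D (no_index (OfNat.ofNat k : A)) = 0 := by
  rw [← Nat.cast_ofNat]
  exact D.map_natCast k

theorem Derivation.map_prod_of_map_eq_mul {R A ι : Type*} [CommSemiring R] [CommSemiring A]
    [Algebra R A] (D : Derivation R A A) (s : Finset ι) (f g : ι → A)
    (h : ∀ i ∈ s, D (f i) = g i * f i) :
    D (∏ i ∈ s, f i) = (∑ i ∈ s, g i) * ∏ i ∈ s, f i := by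
  classical
  induction s using Finset.induction_on with
  | empty => simp
  | insert a s ha ih =>
    rw [prod_insert ha, sum_insert ha, Derivation.leibniz, smul_eq_mul, smul_eq_mul,
      ih fun i hi => h i (mem_insert_of_mem hi), h a (mem_insert_self a s)]
    ring

noncomputable def eulerDerivation (R : Type*) [CommSemiring R] : Derivation R R⟦X⟧ R⟦X⟧ :=
  (X : R⟦X⟧) • d⁄dX R

local notation "θ" => eulerDerivation ℚ

theorem coeff_eulerDerivation {R : Type*} [CommSemiring R] (f : R⟦X⟧) (n : ℕ) :
    coeff n (eulerDerivation R f) = n * coeff n f := by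
  rcases n with _ | n
  · simp [eulerDerivation]
  · rw [eulerDerivation, Derivation.smul_apply, smul_eq_mul, coeff_succ_X_mul, coeff_derivative]
    push_cast
    ring

theorem eulerDerivation_C_mul {R : Type*} [CommSemiring R] (c : R) (f : R⟦X⟧) :
    eulerDerivation R (C c * f) = C c * eulerDerivation R f := by
  rw [← smul_eq_C_mul, Derivation.map_smul, smul_eq_C_mul]

theorem eulerDerivation_X {R : Type*} [CommSemiring R] : eulerDerivation R X = X := by
  simp [eulerDerivation]

theorem X_pow_dvd_of_X_pow_dvd_eulerDerivation_sub_mul {K : Type*} [Field K] [CharZero K]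
    {E h : K⟦X⟧} {N : ℕ} (hE : constantCoeff E = 1) (h1 : coeff 1 h = 0)
    (hh : X ^ N ∣ eulerDerivation K h - E * h) : X ^ N ∣ h := by
  rw [X_pow_dvd_iff] at hh ⊢
  intro m hm
  induction m using Nat.strong_induction_on with
  | _ m ih =>
    have hconv : coeff m (E * h) = coeff m h := by
      rw [coeff_mul, sum_eq_single_of_mem (0, m) (by simp)]
      · simp [hE]
      · rintro ⟨i, j⟩ hij hne
        have hj : j < m := by
          rw [HasAntidiagonal.mem_antidiagonal] at hij
          rcases i with _ | i
          · simp_all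
          · omega
        rw [ih j hj (hj.trans hm), mul_zero]
    have := hh m hm
    rw [map_sub, coeff_eulerDerivation, hconv, ← sub_one_mul, mul_eq_zero, sub_eq_zero] at this
    rcases this with hm1 | hm0
    · rwa [show m = 1 by exact_mod_cast hm1]
    · exact hm0

noncomputable def sigmaSeries (k : ℕ) : ℚ⟦X⟧ := mk fun n => σ k n

noncomputable def EisensteinE2 : ℚ⟦X⟧ := 1 - 24 * sigmaSeries 1

theorem EisensteinE4_eq : EisensteinE4 = 1 + 240 * sigmaSeries 3 := by
  ext n
  rcases eq_or_ne n 0 with rfl | hn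
  · simp [EisensteinE4, sigmaSeries]
  · simp [EisensteinE4, sigmaSeries, coeff_ofNat_mul, hn, sigma_apply, coeff_one]

theorem EisensteinE6_eq : EisensteinE6 = 1 - 504 * sigmaSeries 5 := by
  ext n
  rcases eq_or_ne n 0 with rfl | hn
  · simp [EisensteinE6, sigmaSeries]
  · simp [EisensteinE6, sigmaSeries, coeff_ofNat_mul, hn, sigma_apply, coeff_one]

theorem sigmaSeries_one_mul_sigmaSeries_three :
    240 * (sigmaSeries 1 * sigmaSeries 3) =
      21 * sigmaSeries 5 + 10 * sigmaSeries 3 - sigmaSeries 1 - 30 * θ (sigmaSeries 3) := by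
  ext n
  simp only [map_sub, map_add, coeff_ofNat_mul, coeff_mul, coeff_eulerDerivation, sigmaSeries,
    coeff_mk, sum_antidiagonal_sigma_one_mul_sigma_three]
  ring

theorem sigmaSeries_one_mul_sigmaSeries_five_sub_sigmaSeries_three_sq :
    1008 * (sigmaSeries 1 * sigmaSeries 5) - 4800 * sigmaSeries 3 ^ 2 =
      42 * sigmaSeries 5 + 40 * sigmaSeries 3 + 2 * sigmaSeries 1 - 84 * θ (sigmaSeries 5) := by
  ext n
  simp only [map_sub, map_add, coeff_ofNat_mul, pow_two, coeff_mul, coeff_eulerDerivation,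
    sigmaSeries, coeff_mk,
    sum_antidiagonal_sigma_one_mul_sigma_five_sub_sigma_three_mul_sigma_three]
  ring

theorem three_mul_eulerDerivation_EisensteinE4 :
    3 * θ EisensteinE4 = EisensteinE2 * EisensteinE4 - EisensteinE6 := by
  simp only [EisensteinE4_eq, EisensteinE6_eq, EisensteinE2, map_add, Derivation.map_one_eq_zero,
    Derivation.leibniz, Derivation.map_ofNat, smul_eq_mul, mul_zero, add_zero, zero_add]
  linear_combination 24 * sigmaSeries_one_mul_sigmaSeries_three

theorem two_mul_eulerDerivation_EisensteinE6 :
    2 * θ EisensteinE6 = EisensteinE2 * EisensteinE6 - EisensteinE4 ^ 2 := by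
  simp only [EisensteinE4_eq, EisensteinE6_eq, EisensteinE2, map_sub, Derivation.map_one_eq_zero,
    Derivation.leibniz, Derivation.map_ofNat, smul_eq_mul, mul_zero, add_zero, zero_sub]
  linear_combination -12 * sigmaSeries_one_mul_sigmaSeries_five_sub_sigmaSeries_three_sq

theorem eulerDerivation_EisensteinE4_pow_three_sub_EisensteinE6_sq :
    θ (EisensteinE4 ^ 3 - EisensteinE6 ^ 2) =
      EisensteinE2 * (EisensteinE4 ^ 3 - EisensteinE6 ^ 2) := by
  simp only [map_sub, Derivation.leibniz_pow, smul_eq_mul, nsmul_eq_mul]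
  linear_combination EisensteinE4 ^ 2 * three_mul_eulerDerivation_EisensteinE4 -
    EisensteinE6 * two_mul_eulerDerivation_EisensteinE6

/-- `X ^ m / (1 - X ^ m)`, whose multiples `m * lambertTerm m` sum to the Lambert series
`∑ σ₁(n) Xⁿ`. -/
noncomputable def lambertTerm (R : Type*) [Semiring R] (m : ℕ) : R⟦X⟧ :=
  mk fun j => if m ∣ j ∧ j ≠ 0 then 1 else 0

theorem lambertTerm_eq_expand_sub_one {R : Type*} [CommRing R] {m : ℕ} (hm : m ≠ 0) :
    lambertTerm R m = expand m hm (mk 1) - 1 := by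
  ext j
  rw [lambertTerm, coeff_mk, map_sub, coeff_expand, coeff_one]
  by_cases hj : j = 0 <;> by_cases hmj : m ∣ j <;> simp [hj, hmj]

theorem one_sub_X_pow_mul_lambertTerm {R : Type*} [CommRing R] {m : ℕ} (hm : m ≠ 0) :
    (1 - X ^ m) * lambertTerm R m = X ^ m := by
  have hgeom : (1 - X ^ m) * expand m hm (mk 1 : R⟦X⟧) = 1 := by
    rw [← expand_X m hm, ← map_one (expand m hm), ← map_sub, ← map_mul, mul_comm,
      mk_one_mul_one_sub_eq_one]
  rw [lambertTerm_eq_expand_sub_one hm, mul_sub, hgeom]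
  ring

theorem eulerDerivation_one_sub_X_pow_pow {R : Type*} [CommRing R] {m : ℕ} (hm : m ≠ 0) (k : ℕ) :
    eulerDerivation R ((1 - X ^ m) ^ k) =
      -((k * m : R⟦X⟧) * lambertTerm R m) * (1 - X ^ m) ^ k := by
  have hbase :
      eulerDerivation R (1 - X ^ m) = -((m : R⟦X⟧) * lambertTerm R m) * (1 - X ^ m) := by
    have hL := one_sub_X_pow_mul_lambertTerm (R := R) hm
    obtain ⟨m, rfl⟩ := Nat.exists_eq_add_one_of_ne_zero hm
    rw [Derivation.map_sub, Derivation.map_one_eq_zero, Derivation.leibniz_pow, eulerDerivation_X]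
    simp only [nsmul_eq_mul, smul_eq_mul, Nat.add_sub_cancel]
    push_cast
    linear_combination ((m : R⟦X⟧) + 1) * hL
  rcases k with _ | k
  · simp
  · rw [Derivation.leibniz_pow, hbase, Nat.add_sub_cancel]
    simp only [nsmul_eq_mul, smul_eq_mul]
    push_cast
    ring

theorem eulerDerivation_X_mul_prod_one_sub_X_pow_pow {R : Type*} [CommRing R] (s : Finset ℕ)
    (hs : 0 ∉ s) (k : ℕ) :
    eulerDerivation R (X * ∏ m ∈ s, (1 - X ^ m) ^ k) =
      (1 - (k : R⟦X⟧) * ∑ m ∈ s, (m : R⟦X⟧) * lambertTerm R m) *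
        (X * ∏ m ∈ s, (1 - X ^ m) ^ k) := by
  rw [Derivation.leibniz, eulerDerivation_X, Derivation.map_prod_of_map_eq_mul _ s _ _
    fun m hm => eulerDerivation_one_sub_X_pow_pow (ne_of_mem_of_not_mem hm hs) k]
  simp only [smul_eq_mul, sum_neg_distrib, mul_assoc, ← mul_sum]
  ring

theorem coeff_sum_mul_lambertTerm {N j : ℕ} (hj : j ≤ N) :
    coeff j (∑ m ∈ Icc 1 N, (m : ℚ⟦X⟧) * lambertTerm ℚ m) = σ 1 j := by
  rcases Nat.eq_zero_or_pos j with rfl | hj0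
  · simp [lambertTerm, coeff_natCast_mul]
  have hdiv : {m ∈ Icc 1 N | m ∣ j} = j.divisors := by
    ext m
    simp only [mem_filter, mem_Icc, Nat.mem_divisors]
    constructor
    · rintro ⟨-, hmj⟩
      exact ⟨hmj, hj0.ne'⟩
    · rintro ⟨hmj, -⟩
      exact ⟨⟨Nat.pos_of_dvd_of_pos hmj hj0, (Nat.le_of_dvd hj0 hmj).trans hj⟩, hmj⟩
  simp only [map_sum, coeff_natCast_mul, lambertTerm, coeff_mk,
    hj0.ne', ne_eq, not_false_eq_true, and_true, mul_ite, mul_one, mul_zero]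
  rw [← sum_filter, hdiv, sigma_one_apply]
  push_cast
  rfl

theorem X_pow_succ_dvd_sigmaSeries_one_sub_sum_lambertTerm (N : ℕ) :
    X ^ (N + 1) ∣ sigmaSeries 1 - ∑ m ∈ Icc 1 N, (m : ℚ⟦X⟧) * lambertTerm ℚ m := by
  refine X_pow_dvd_iff.2 fun j hj => ?_
  rw [map_sub, coeff_sum_mul_lambertTerm (Nat.lt_succ_iff.1 hj), sigmaSeries, coeff_mk, sub_self]

/-- The q-expansion identity `Δ = (E₄³ − E₆²)/1728`, stated coefficientwise
(the `n`-th coefficient of `q·∏_{m≥1}(1−q^m)^{24}` only depends on the factors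
with `m ≤ n`, so the infinite product is truncated at `n`). -/
theorem delta_eq_eisenstein (n : ℕ) :
    PowerSeries.coeff (R := ℚ) n
        (PowerSeries.X * ∏ m ∈ Finset.Icc 1 n, (1 - PowerSeries.X ^ m) ^ 24) =
      PowerSeries.coeff (R := ℚ) n
        (PowerSeries.C (R := ℚ) (1 / 1728) * (EisensteinE4 ^ 3 - EisensteinE6 ^ 2)) := by
  set P : ℚ⟦X⟧ := X * ∏ m ∈ Icc 1 n, (1 - X ^ m) ^ 24
  set F : ℚ⟦X⟧ := C (1 / 1728 : ℚ) * (EisensteinE4 ^ 3 - EisensteinE6 ^ 2)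
  have hP := eulerDerivation_X_mul_prod_one_sub_X_pow_pow (R := ℚ) (Icc 1 n) (by simp) 24
  have hF : θ F = EisensteinE2 * F := by
    rw [eulerDerivation_C_mul, eulerDerivation_EisensteinE4_pow_three_sub_EisensteinE6_sq]
    ring
  obtain ⟨g, hg⟩ := X_pow_succ_dvd_sigmaSeries_one_sub_sum_lambertTerm n
  have hdvd : X ^ (n + 1) ∣ θ (P - F) - EisensteinE2 * (P - F) :=
    ⟨24 * g * P, by rw [map_sub, hP, hF, EisensteinE2]; linear_combination (24 * P) * hg⟩
  have h1 : coeff 1 (P - F) = 0 := by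
    have hprod : ∏ m ∈ Icc 1 n, ((1 : ℚ) - 0 ^ m) ^ 24 = 1 :=
      prod_eq_one fun m hm => by rw [zero_pow (by grind), sub_zero, one_pow]
    simp [P, F, coeff_one_pow, EisensteinE4, EisensteinE6, hprod]
    norm_num
  have := X_pow_dvd_iff.1 (X_pow_dvd_of_X_pow_dvd_eulerDerivation_sub_mul
    (by simp [EisensteinE2, sigmaSeries]) h1 hdvd) n n.lt_succ_self
  rwa [map_sub, sub_eq_zero] at this
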